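/- The eval-readback evaluator for head reduction is big-step equivalent to the balanced hybrid head-reduction evaluator: for all terms M and N, hr(M) = N if and only if there exists a term P with bn(M) = P and rh(P) = N; i.e., as big-step relations, rh ∘ bn = hr. -/
import Mathlib


/-- Pure λ-calculus terms (de Bruijn representation). -/
inductive Tm : Type
  | var : Nat → Tm
  | lam : Tm → Tm
  | app : Tm → Tm → Tm
deriving DecidableEq

/-- Shift the free variables (those ≥ `c`) of a term up by one. -/
def lift (c : Nat) : Tm → Tm
  | .var n => if n < c then .var n else .var (n + 1)
  | .lam b => .lam (lift (c + 1) b)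
  | .app m n => .app (lift c m) (lift c n)

/-- Capture-avoiding substitution `[N/k]B` (de Bruijn). -/
def subst (N : Tm) (k : Nat) : Tm → Tm
  | .var n => if n < k then .var n else if n = k then N else .var (n - 1)
  | .lam b => .lam (subst (lift 0 N) (k + 1) b)
  | .app m n => .app (subst N k m) (subst N k n)
/-- Composition of big-step relations: `(Comp s2 s1) M N` iff
    there is `P` with `s1 M P` and `s2 P N`. -/
def Comp (s2 s1 : Tm → Tm → Prop) : Tm → Tm → Prop :=
  fun M N => ∃ P, s1 M P ∧ s2 P N

/-- The term `Ω = (λx.x x)(λx.x x)`. -/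
def Omega : Tm :=
  .app (.lam (.app (.var 0) (.var 0))) (.lam (.app (.var 0) (.var 0)))
/-- Call-by-name big-step relation. -/
inductive Bn : Tm → Tm → Prop
  | var : ∀ n, Bn (.var n) (.var n)
  | lam : ∀ B, Bn (.lam B) (.lam B)
  | beta : ∀ M N B B', Bn M (.lam B) → Bn (subst N 0 B) B' → Bn (.app M N) B'
  | neu : ∀ M N M', Bn M M' → (∀ B, M' ≠ .lam B) → Bn (.app M N) (.app M' N)

/-- Head reduction big-step relation (with call-by-name as subsidiary). -/
inductive Hr : Tm → Tm → Prop
  | var : ∀ n, Hr (.var n) (.var n)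
  | lam : ∀ B B', Hr B B' → Hr (.lam B) (.lam B')
  | beta : ∀ M N B B', Bn M (.lam B) → Hr (subst N 0 B) B' → Hr (.app M N) B'
  | neu : ∀ M N M' M'', Bn M M' → (∀ B, M' ≠ .lam B) → Hr M' M'' →
      Hr (.app M N) (.app M'' N)

/-- The readback `rh` of the eval-readback evaluator for head reduction. -/
inductive Rh : Tm → Tm → Prop
  | var : ∀ n, Rh (.var n) (.var n)
  | lam : ∀ B P B'', Bn B P → Rh P B'' → Rh (.lam B) (.lam B'')
  | app : ∀ M N M', Rh M M' → Rh (.app M N) (.app M' N)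


/-- Values produced by call-by-name. -/
inductive IsVal : Tm → Prop
  | var : ∀ n, IsVal (.var n)
  | lam : ∀ B, IsVal (.lam B)
  | app : ∀ Q N, IsVal Q → (∀ B, Q ≠ .lam B) → IsVal (.app Q N)

lemma bn_det : ∀ {M A B : Tm}, Bn M A → Bn M B → A = B := by
  intro M A B h
  induction h generalizing B with
  | var n => intro h2; cases h2; rfl
  | lam B0 => intro h2; cases h2; rfl
  | beta M N B0 B' h1 h2 ih1 ih2 =>
    intro h3
    cases h3 with
    | beta M N B1 B1' g1 g2 =>
      have := ih1 g1
      injection this with e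
      subst e
      exact ih2 g2
    | neu M N M' g1 g2 => exact absurd (ih1 g1).symm (g2 _)
  | neu M N M' h1 h2 ih =>
    intro h3
    cases h3 with
    | beta M N B1 B1' g1 g2 => exact absurd (ih g1) (h2 _)
    | neu M N M2 g1 g2 => rw [ih g1]

lemma bn_isval : ∀ {M P : Tm}, Bn M P → IsVal P := by
  intro M P h
  induction h with
  | var n => exact .var n
  | lam B => exact .lam B
  | beta _ _ _ _ _ _ _ ih2 => exact ih2
  | neu M N M' h1 h2 ih => exact .app M' N ih h2

lemma isval_bn : ∀ {P : Tm}, IsVal P → Bn P P := by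
  intro P h
  induction h with
  | var n => exact .var n
  | lam B => exact .lam B
  | app Q N hv hne ih => exact .neu Q N Q ih hne

/-- Absorption: evaluating with Bn first does not change the Hr result. -/
lemma bn_hr_absorb : ∀ {M P N : Tm}, Bn M P → Hr P N → Hr M N := by
  intro M P N h
  induction h generalizing N with
  | var n => exact fun h2 => h2
  | lam B => exact fun h2 => h2
  | beta M0 N0 B B' h1 h2 ih1 ih2 =>
    intro h3
    exact .beta M0 N0 B N h1 (ih2 h3)
  | neu M0 N0 M' h1 h2 ih =>
    intro h3
    cases h3 with
    | beta _ _ B _ g1 g2 =>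
      have hv := isval_bn (bn_isval h1)
      exact absurd (bn_det hv g1) (h2 _)
    | neu _ _ M2 M'' g1 g2 g3 =>
      have hv := isval_bn (bn_isval h1)
      have e := bn_det hv g1
      subst e
      exact .neu M0 N0 M' M'' h1 h2 g3

lemma rh_to_hr : ∀ {P N : Tm}, Rh P N → ∀ {M : Tm}, Bn M P → Hr M N := by
  intro P N h
  induction h with
  | var n => intro M hM; exact bn_hr_absorb hM (.var n)
  | lam B P' B'' h1 h2 ih =>
    intro M hM
    exact bn_hr_absorb hM (.lam B B'' (ih h1))
  | app Q N' Q' h ih =>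
    intro M hM
    have hv := bn_isval hM
    cases hv with
    | app _ _ hvQ hne =>
      have hQQ : Bn Q Q := isval_bn hvQ
      exact bn_hr_absorb hM (.neu Q N' Q Q' hQQ hne (ih hQQ))

lemma hr_to_rh : ∀ {M N : Tm}, Hr M N → ∃ P : Tm, Bn M P ∧ Rh P N := by
  intro M N h
  induction h with
  | var n => exact ⟨.var n, .var n, .var n⟩
  | lam B B' h ih =>
    obtain ⟨P, hb, hr⟩ := ih
    exact ⟨.lam B, .lam B, .lam B P B' hb hr⟩
  | beta M0 N0 B B' h1 h2 ih =>
    obtain ⟨P, hb, hr⟩ := ih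
    exact ⟨P, .beta M0 N0 B P h1 hb, hr⟩
  | neu M0 N0 M' M'' h1 h2 h3 ih =>
    obtain ⟨P, hb, hr⟩ := ih
    have e := bn_det (isval_bn (bn_isval h1)) hb
    subst e
    exact ⟨.app M' N0, .neu M0 N0 M' h1 h2, .app M' N0 M'' hr⟩

/-- The eval-readback evaluator rh ∘ bn is big-step equivalent to
    the balanced hybrid head-reduction evaluator. -/
theorem rh_bn_equiv_hr :
    (∀ M N : Tm, Hr M N ↔ ∃ P : Tm, Bn M P ∧ Rh P N) ∧
    Comp Rh Bn = Hr := by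
  constructor
  · intro M N
    constructor
    · exact hr_to_rh
    · rintro ⟨P, hb, hr⟩; exact rh_to_hr hr hb
  · funext M N
    apply propext
    constructor
    · rintro ⟨P, hb, hr⟩; exact rh_to_hr hr hb
    · exact hr_to_rh
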